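/- arXiv:2010.04347 — 2 statements merged into one kernel-verified Lean document; each statement's English description precedes it below -/
import Mathlib

section
/- Let α > 0 and β > 0, and define h(x) = (α^{1/β}/(αβ))·exp(α/x^β)·x^{1+β}·[Γ(1 − 1/β; α) − Γ(1 − 1/β; α/x^β)] for x ∈ (0,1), where Γ(s; y) = ∫_y^∞ t^{s−1} e^{−t} dt. Then h is differentiable on (0,1) and for every x ∈ (0,1), h'(x) = −x − h(x)·(αβ/x^{β+1} − (β+1)/x). -/
/-!
Differentiating `Γ(s; ·)` under the fundamental theorem of calculus gives `-y^(s-1) e^(-y)`.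
With `s = 1 - 1/β` and `y = α / x^β` this is `-x e^(-y) / α^(1/β)`, so in the product rule the
term coming from the incomplete gamma factor collapses to `-x`, while the logarithmic derivatives
`-α β / x^(β+1)` of `exp (α / x^β)` and `(β+1) / x` of `x^(1+β)` contribute the multiple of `h x`.
-/

open Real MeasureTheory Set Filter Topology

/-- The upper incomplete gamma function `Γ(s; y) = ∫_y^∞ t^(s-1) e^(-t) dt`. -/
noncomputable def uiGamma (s y : ℝ) : ℝ :=
  ∫ t in Set.Ioi y, t ^ (s - 1) * Real.exp (-t)

lemma continuousOn_rpow_mul_exp_neg (p : ℝ) :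
    ContinuousOn (fun t : ℝ => t ^ p * exp (-t)) (Ioi 0) :=
  (continuousOn_id.rpow_const fun _ ht => Or.inl (ne_of_gt ht)).mul continuousOn_id.neg.rexp

lemma integrableOn_Ioi_rpow_mul_exp_neg (p : ℝ) {a : ℝ} (ha : 0 < a) :
    IntegrableOn (fun t : ℝ => t ^ p * exp (-t)) (Ioi a) := by
  refine integrable_of_isBigO_exp_neg one_half_pos
    ((continuousOn_rpow_mul_exp_neg p).mono fun _ ht => ha.trans_le ht) ?_
  simpa only [mul_comm] using (Gamma_integrand_isLittleO p).isBigO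

lemma uiGamma_sub_uiGamma (s : ℝ) {a b : ℝ} (ha : 0 < a) (hb : 0 < b) :
    uiGamma s a - uiGamma s b = ∫ t in a..b, t ^ (s - 1) * exp (-t) :=
  intervalIntegral.integral_Ioi_sub_Ioi' (integrableOn_Ioi_rpow_mul_exp_neg _ ha)
    (integrableOn_Ioi_rpow_mul_exp_neg _ hb)

lemma hasDerivAt_uiGamma (s : ℝ) {y : ℝ} (hy : 0 < y) :
    HasDerivAt (uiGamma s) (-(y ^ (s - 1) * exp (-y))) y := by
  have hnhds : Ioi 0 ∈ 𝓝 y := isOpen_Ioi.mem_nhds hy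
  have hFTC : HasDerivAt (fun z => ∫ t in y..z, t ^ (s - 1) * exp (-t))
      (y ^ (s - 1) * exp (-y)) y :=
    intervalIntegral.integral_hasDerivAt_right IntervalIntegrable.refl
      ((continuousOn_rpow_mul_exp_neg _).stronglyMeasurableAtFilter isOpen_Ioi _ hy)
      ((continuousOn_rpow_mul_exp_neg _).continuousAt hnhds)
  refine (hFTC.const_sub (uiGamma s y)).congr_of_eventuallyEq ?_
  filter_upwards [hnhds] with z hz
  rw [← uiGamma_sub_uiGamma s hy hz, sub_sub_cancel]

lemma hasDerivAt_const_div_rpow (a : ℝ) {β x : ℝ} (hx : 0 < x) :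
    HasDerivAt (fun y => a / y ^ β) (-(a * β / x ^ (β + 1))) x := by
  have hxβ : x ^ β ≠ 0 := (rpow_pos_of_pos hx β).ne'
  refine ((hasDerivAt_const x a).div (hasDerivAt_rpow_const (Or.inl hx.ne')) hxβ).congr_deriv ?_
  rw [rpow_add hx, rpow_sub hx, rpow_one]
  field_simp
  ring

lemma div_rpow_rpow_neg_one_div {a x : ℝ} (ha : 0 ≤ a) (hx : 0 ≤ x) {β : ℝ} (hβ : β ≠ 0) :
    (a / x ^ β) ^ (-(1 / β)) = x / a ^ (1 / β) := by
  rw [div_rpow ha (rpow_nonneg hx β), ← rpow_mul hx, rpow_neg ha, mul_neg,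
    mul_one_div_cancel hβ, rpow_neg_one]
  field_simp

/-- **Derivative of `h` in Theorem 2.** For `α, β > 0`, the function
`h x = (α^(1/β) / (α * β)) * exp (α / x^β) * x^(1+β) *
  (Γ(1 - 1/β; α) - Γ(1 - 1/β; α / x^β))`
is differentiable on `(0, 1)` with
`h' x = -x - h x * (α * β / x^(β+1) - (β+1) / x)`. -/
theorem unitGompertz_h_hasDerivAt (α β : ℝ) (hα : 0 < α) (hβ : 0 < β)
    (h : ℝ → ℝ)
    (hh : h = fun x => α ^ (1 / β) / (α * β) * Real.exp (α / x ^ β) * x ^ (1 + β) *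
      (uiGamma (1 - 1 / β) α - uiGamma (1 - 1 / β) (α / x ^ β))) :
    ∀ x ∈ Set.Ioo (0:ℝ) 1,
      HasDerivAt h (-x - h x * (α * β / x ^ (β + 1) - (β + 1) / x)) x := by
  rintro x ⟨hx, -⟩
  subst hh
  have hg : HasDerivAt (fun y => α / y ^ β) (-(α * β / x ^ (β + 1))) x :=
    hasDerivAt_const_div_rpow α hx
  have hΓ := ((hasDerivAt_uiGamma (1 - 1 / β) (div_pos hα (rpow_pos_of_pos hx β))).comp x
    hg).const_sub (uiGamma (1 - 1 / β) α)
  refine (((hg.exp.const_mul (α ^ (1 / β) / (α * β))).mul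
    (hasDerivAt_rpow_const (Or.inl hx.ne'))).mul hΓ).congr_deriv ?_
  have hintegrand : (α / x ^ β) ^ (1 - 1 / β - 1) = x / α ^ (1 / β) := by
    rw [← div_rpow_rpow_neg_one_div hα.le hx.le hβ.ne']
    ring_nf
  simp only [Pi.mul_apply, Function.comp_apply, hintegrand, exp_neg, rpow_add hx, rpow_one,
    show 1 + β - 1 = β by ring]
  have hαβ : α ^ (1 / β) ≠ 0 := (rpow_pos_of_pos hα _).ne'
  have hxβ : x ^ β ≠ 0 := (rpow_pos_of_pos hx β).ne'
  field_simp
  ring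
end

section
/- Let α > 0 and β > 0, and let f(x) = αβ·exp(−α(x^{−β} − 1))/x^{1+β} and F(x) = exp(−α(x^{−β} − 1)) on (0,1). Then the second L-moment λ_2 = 2β_1 − β_0, where β_r = ∫_0^1 x·[F(x)]^r·f(x) dx, is given explicitly by λ_2 = 2·α^{1/β}·2^{1/β − 1}·e^{2α}·Γ(1 − 1/β; 2α) − α^{1/β}·e^α·Γ(1 − 1/β; α), where Γ(s; y) = ∫_y^∞ t^{s−1} e^{−t} dt. -/
open Real Set MeasureTheory

noncomputable def unitGompertzPDF (α β x : ℝ) : ℝ :=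
  α * β * exp (-α * (x ^ (-β) - 1)) / x ^ (1 + β)

noncomputable def unitGompertzCDF (α β x : ℝ) : ℝ :=
  exp (-α * (x ^ (-β) - 1))

section Substitution

variable {β c : ℝ}

lemma image_mul_rpow_neg_Ioo (hβ : 0 < β) (hc : 0 < c) :
    (fun x : ℝ => c * x ^ (-β)) '' Ioo 0 1 = Ioi c := by
  ext t
  constructor
  · rintro ⟨x, ⟨hx0, hx1⟩, rfl⟩
    exact lt_mul_of_one_lt_right hc (one_lt_rpow_of_pos_of_lt_one_of_neg hx0 hx1 (by linarith))
  · intro (hct : c < t)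
    have hq : 0 < c / t := div_pos hc (hc.trans hct)
    refine ⟨(c / t) ^ β⁻¹, ⟨by positivity, rpow_lt_one hq.le ?_ (by positivity)⟩, ?_⟩
    · rwa [div_lt_one (hc.trans hct)]
    · dsimp only
      rw [rpow_neg (by positivity), rpow_inv_rpow hq.le hβ.ne']
      field_simp

lemma integral_Ioi_eq_integral_Ioo_comp_mul_rpow_neg {E : Type*} [NormedAddCommGroup E]
    [NormedSpace ℝ E] (hβ : 0 < β) (hc : 0 < c) (g : ℝ → E) :
    ∫ t in Ioi c, g t = ∫ x in Ioo 0 1, (c * β * x ^ (-β - 1)) • g (c * x ^ (-β)) := by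
  have hderiv : ∀ x ∈ Ioo (0 : ℝ) 1, HasDerivWithinAt (fun x : ℝ => c * x ^ (-β))
      (c * (-β * x ^ (-β - 1))) (Ioo 0 1) x := fun x hx =>
    ((hasDerivAt_rpow_const (Or.inl hx.1.ne')).const_mul c).hasDerivWithinAt
  have hinj : InjOn (fun x : ℝ => c * x ^ (-β)) (Ioo 0 1) := fun a ha b hb hab =>
    (strictAntiOn_rpow_Ioi_of_exponent_neg (neg_neg_of_pos hβ)).injOn ha.1 hb.1
      (mul_left_cancel₀ hc.ne' hab)
  rw [← image_mul_rpow_neg_Ioo hβ hc,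
    integral_image_eq_integral_abs_deriv_smul measurableSet_Ioo hderiv hinj]
  refine setIntegral_congr_fun measurableSet_Ioo fun x hx => ?_
  rw [show c * (-β * x ^ (-β - 1)) = -(c * β * x ^ (-β - 1)) by ring, abs_neg,
    abs_of_pos (mul_pos (mul_pos hc hβ) (rpow_pos_of_pos hx.1 _))]

lemma integral_Ioo_rpow_neg_mul_exp (hβ : 0 < β) (hc : 0 < c) :
    ∫ x in Ioo 0 1, x ^ (-β) * exp (-(c * x ^ (-β))) =
      c ^ (1 / β - 1) / β * uiGamma (1 - 1 / β) c := by
  rw [uiGamma, integral_Ioi_eq_integral_Ioo_comp_mul_rpow_neg hβ hc, ← integral_const_mul]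
  refine setIntegral_congr_fun measurableSet_Ioo fun x hx => ?_
  have hpow : (c * x ^ (-β)) ^ (1 - 1 / β - 1) = c ^ (-(1 / β)) * x := by
    rw [mul_rpow hc.le (rpow_pos_of_pos hx.1 _).le, ← rpow_mul hx.1.le,
      show -β * (1 - 1 / β - 1) = 1 by field_simp; ring, rpow_one, sub_sub_cancel_left]
  have hc_pow : c ^ (1 / β - 1) * c * c ^ (-(1 / β)) = 1 := by
    rw [← rpow_add_one hc.ne', ← rpow_add hc, sub_add_cancel, add_neg_cancel, rpow_zero]
  have hx_pow : x ^ (-β - 1) * x = x ^ (-β) := by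
    rw [← rpow_add_one hx.1.ne', sub_add_cancel]
  rw [smul_eq_mul, hpow]
  calc x ^ (-β) * exp (-(c * x ^ (-β)))
      = (c ^ (1 / β - 1) * c * c ^ (-(1 / β))) * (x ^ (-β - 1) * x) * (β / β) *
          exp (-(c * x ^ (-β))) := by rw [hc_pow, hx_pow, div_self hβ.ne']; ring
    _ = _ := by ring

end Substitution

section UnitGompertz

variable {α β : ℝ}

lemma unitGompertz_pwm_integrand_eq (r : ℕ) {x : ℝ} (hx : 0 < x) :
    x * unitGompertzCDF α β x ^ r * unitGompertzPDF α β x =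
      α * β * exp ((r + 1) * α) * (x ^ (-β) * exp (-((r + 1) * α * x ^ (-β)))) := by
  have hexp : exp (-α * (x ^ (-β) - 1)) ^ r * exp (-α * (x ^ (-β) - 1)) =
      exp ((r + 1) * α) * exp (-((r + 1) * α * x ^ (-β))) := by
    rw [← exp_nat_mul, ← exp_add, ← exp_add]
    ring_nf
  have hx_pow : x / x ^ (1 + β) = x ^ (-β) := by
    rw [rpow_add hx, rpow_one, rpow_neg hx.le]
    field_simp
  calc x * unitGompertzCDF α β x ^ r * unitGompertzPDF α β x
      = α * β * (exp (-α * (x ^ (-β) - 1)) ^ r * exp (-α * (x ^ (-β) - 1))) *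
          (x / x ^ (1 + β)) := by unfold unitGompertzCDF unitGompertzPDF; ring
    _ = _ := by rw [hexp, hx_pow]; ring

theorem unitGompertz_pwm_eq (hα : 0 < α) (hβ : 0 < β) (r : ℕ) :
    ∫ x in (0 : ℝ)..1, x * unitGompertzCDF α β x ^ r * unitGompertzPDF α β x =
      α ^ (1 / β) * ((r : ℝ) + 1) ^ (1 / β - 1) * exp ((r + 1) * α) *
        uiGamma (1 - 1 / β) ((r + 1) * α) := by
  have hα_pow : α * α ^ (1 / β - 1) = α ^ (1 / β) := by
    rw [mul_comm, ← rpow_add_one hα.ne', sub_add_cancel]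
  rw [intervalIntegral.integral_of_le zero_le_one, integral_Ioc_eq_integral_Ioo,
    setIntegral_congr_fun measurableSet_Ioo fun x hx => unitGompertz_pwm_integrand_eq r hx.1,
    integral_const_mul, integral_Ioo_rpow_neg_mul_exp hβ (by positivity),
    mul_rpow (by positivity) hα.le, ← hα_pow]
  field_simp

end UnitGompertz

/-- **Second L-moment of the unit-Gompertz distribution.**
For `α, β > 0`, with density `f x = α * β * exp (-α * (x ^ (-β) - 1)) / x ^ (1 + β)`
and cdf `F x = exp (-α * (x ^ (-β) - 1))` on `(0, 1)`, the second L-moment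
`λ₂ = 2 β₁ - β₀` (where `β_r = ∫_0^1 x * (F x)^r * f x dx`) is
`λ₂ = 2 * α^(1/β) * 2^(1/β - 1) * e^(2α) * Γ(1 - 1/β; 2α)
      - α^(1/β) * e^α * Γ(1 - 1/β; α)`. -/
theorem unitGompertz_second_L_moment (α β : ℝ) (hα : 0 < α) (hβ : 0 < β)
    (f F : ℝ → ℝ)
    (hf : f = fun x => α * β * Real.exp (-α * (x ^ (-β) - 1)) / x ^ (1 + β))
    (hF : F = fun x => Real.exp (-α * (x ^ (-β) - 1))) :
    2 * (∫ x in (0:ℝ)..1, x * F x * f x) - (∫ x in (0:ℝ)..1, x * f x) =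
      2 * α ^ (1 / β) * (2:ℝ) ^ (1 / β - 1) * Real.exp (2 * α) *
          uiGamma (1 - 1 / β) (2 * α) -
        α ^ (1 / β) * Real.exp α * uiGamma (1 - 1 / β) α := by
  have β₀ := unitGompertz_pwm_eq hα hβ 0
  have β₁ := unitGompertz_pwm_eq hα hβ 1
  simp only [Nat.cast_zero, Nat.cast_one, zero_add, one_add_one_eq_two, one_rpow, one_mul,
    mul_one, pow_zero, pow_one] at β₀ β₁
  subst hf hF
  change 2 * (∫ x in (0:ℝ)..1, x * unitGompertzCDF α β x * unitGompertzPDF α β x) -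
    (∫ x in (0:ℝ)..1, x * unitGompertzPDF α β x) = _
  rw [β₀, β₁]
  ring
end
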